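/- arXiv:2005.02596 — 4 statements merged into one kernel-verified Lean document; each statement's English description precedes it below -/
import Mathlib

section
/- If a transduction f is invariant under permutations, then the relation ≡_f is an equivalence relation on data words (it is reflexive, symmetric and transitive). -/
namespace SSRT

/-- Elements of a factored output: either a retained output triple
(letter, data value, origin — integer origins allow shifting by `z`),
or one of the placeholder marks `(*,*,left)`, `(*,*,middle)`, `(*,*,right)`. -/
inductive FOElem (G D : Type) where
  | tri (g : G) (d : D) (o : ℤ)
  | left
  | middle
  | right
  deriving DecidableEq

namespace FOElem

def isTri {G D : Type} : FOElem G D → Bool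
  | .tri _ _ _ => true
  | _ => false

def isMark {G D : Type} (e : FOElem G D) : Bool := !e.isTri

end FOElem

/-- Data words over the input alphabet `A` with data from `D`. -/
abbrev DataWord (A D : Type) := List (A × D)

/-- Data words with origin information over the output alphabet `G`;
positions of the input are numbered 1,…,n. -/
abbrev OutWord (G D : Type) := List (G × D × ℕ)

/-- A transduction. -/
abbrev Transduction (A G D : Type) := DataWord A D → OutWord G D

variable {A G D : Type}

/-- Apply a permutation of data values to a data word. -/
def permW (π : Equiv.Perm D) (u : DataWord A D) : DataWord A D :=
  u.map fun p => (p.1, π p.2)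

/-- Apply a permutation of data values to an output word. -/
def permOut (π : Equiv.Perm D) (w : OutWord G D) : OutWord G D :=
  w.map fun t => (t.1, π t.2.1, t.2.2)

/-- Apply a permutation of data values to a factored output
(placeholder marks are unchanged). -/
def permFO (π : Equiv.Perm D) : List (FOElem G D) → List (FOElem G D) :=
  List.map fun e => match e with
    | .tri g d o => .tri g (π d) o
    | .left => .left
    | .middle => .middle
    | .right => .right

/-- Shift the origin of every retained triple by `z`. -/
def foShift (z : ℤ) : List (FOElem G D) → List (FOElem G D) :=
  List.map fun e => match e with
    | .tri g d o => .tri g d (o + z)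
    | .left => .left
    | .middle => .middle
    | .right => .right

/-- `f` is invariant under permutations. -/
def PermInvariant (f : Transduction A G D) : Prop :=
  ∀ (π : Equiv.Perm D) (u : DataWord A D), f (permW π u) = permOut π (f u)

/-- `f` is without data peeking: every data value output from origin `o`
already occurs in the input at some position `≤ o`. -/
def NoDataPeeking (f : Transduction A G D) : Prop :=
  ∀ (w : DataWord A D) (t : G × D × ℕ), t ∈ f w →
    ∃ (i : ℕ) (a : A), w[i]? = some (a, t.2.1) ∧ i + 1 ≤ t.2.2

/-- `f` has linear blow up. -/
def LinearBlowUp (f : Transduction A G D) : Prop :=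
  ∃ K : ℕ, ∀ (w : DataWord A D) (o : ℕ), 1 ≤ o → o ≤ w.length →
    ((f w).filter fun t => t.2.2 == o).length ≤ K

variable [DecidableEq G] [DecidableEq D]

/-- Merge consecutive occurrences of equal placeholder marks into one. -/
def collapse : List (FOElem G D) → List (FOElem G D)
  | [] => []
  | [a] => [a]
  | a :: b :: rest =>
      if a = b ∧ a.isMark then collapse (b :: rest)
      else a :: collapse (b :: rest)

/-- The factored output `f(u̲ ∣ v)`. -/
def leftFac (f : Transduction A G D) (u v : DataWord A D) : List (FOElem G D) :=
  collapse ((f (u ++ v)).map fun t =>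
    if t.2.2 ≤ u.length then FOElem.left else FOElem.tri t.1 t.2.1 (t.2.2 : ℤ))

/-- The factored output `f(u ∣ v̲)`. -/
def rightFac (f : Transduction A G D) (u v : DataWord A D) : List (FOElem G D) :=
  collapse ((f (u ++ v)).map fun t =>
    if u.length < t.2.2 then FOElem.right else FOElem.tri t.1 t.2.1 (t.2.2 : ℤ))

/-- The factored output `f(u̲ ∣ v ∣ w̲)`. -/
def threeFac (f : Transduction A G D) (u v w : DataWord A D) : List (FOElem G D) :=
  collapse ((f (u ++ v ++ w)).map fun t =>
    if t.2.2 ≤ u.length then FOElem.left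
    else if t.2.2 ≤ u.length + v.length then FOElem.tri t.1 t.2.1 (t.2.2 : ℤ)
    else FOElem.right)

/-- The factored output `f(u̲ ∣ v̲ ∣ w̲)`. -/
def allFac (f : Transduction A G D) (u v w : DataWord A D) : List (FOElem G D) :=
  collapse ((f (u ++ v ++ w)).map fun t =>
    if t.2.2 ≤ u.length then FOElem.left
    else if t.2.2 ≤ u.length + v.length then FOElem.middle
    else FOElem.right)

/-- `u[d/d']`: replace every occurrence of the data value `d` by `d'`. -/
def replaceD (u : DataWord A D) (d d' : D) : DataWord A D :=
  u.map fun p => (p.1, if p.2 = d then d' else p.2)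

/-- Isomorphism of data words: same length, same letters, and the same
equalities among the data values at the various positions. -/
def Iso (u u' : DataWord A D) : Prop :=
  u.length = u'.length ∧
  (∀ i : ℕ, u[i]?.map Prod.fst = u'[i]?.map Prod.fst) ∧
  (∀ i j : ℕ, (u[i]?.map Prod.snd = u[j]?.map Prod.snd) ↔
          (u'[i]?.map Prod.snd = u'[j]?.map Prod.snd))

/-- `d'` is a safe replacement for `d` in `u`. -/
def SafeRepl (d d' : D) (u : DataWord A D) : Prop := Iso (replaceD u d d') u

def OccursIn (d : D) (u : DataWord A D) : Prop := ∃ p ∈ u, p.2 = d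

/-- `d` is `f`-memorable in `u`. -/
def Memorable (f : Transduction A G D) (d : D) (u : DataWord A D) : Prop :=
  ∃ (v : DataWord A D) (d' : D), SafeRepl d d' u ∧
    leftFac f (replaceD u d d') v ≠ leftFac f u v

/-- `d` is `f`-vulnerable in `u`. -/
def Vulnerable (f : Transduction A G D) (d : D) (u : DataWord A D) : Prop :=
  ∃ (u' v : DataWord A D) (d' : D), ¬ OccursIn d u' ∧
    SafeRepl d d' (u ++ u' ++ v) ∧
    rightFac f (u ++ u') (replaceD v d d') ≠ rightFac f (u ++ u') v

/-- `d` is `f`-influencing in `u`. -/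
def Influencing (f : Transduction A G D) (d : D) (u : DataWord A D) : Prop :=
  Memorable f d u ∨ Vulnerable f d u

/-- The last occurrence of `d` in `u` is at (0-based) index `i`. -/
def IsLastOcc (u : DataWord A D) (d : D) (i : ℕ) : Prop :=
  (∃ a : A, u[i]? = some (a, d)) ∧ ∀ j : ℕ, i < j → ∀ p : A × D, u[j]? = some p → p.2 ≠ d

/-- `d` is fresher than `e` in `u`: the last occurrence of `d` in `u` is
strictly to the right of the last occurrence of `e`. -/
def Fresher (u : DataWord A D) (d e : D) : Prop :=
  ∃ i j : ℕ, IsLastOcc u d i ∧ IsLastOcc u e j ∧ j < i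

/-- `l` is the sequence of all `f`-influencing values of `u`, listed freshest
first: the `i`-th element (1-based) is the `i`-th `f`-influencing value of `u`.
(The paper writes this sequence in the reverse direction, as `d_m ⋯ d_1`.) -/
def IsIflSeq (f : Transduction A G D) (u : DataWord A D) (l : List D) : Prop :=
  (∀ d, d ∈ l ↔ Influencing f d u) ∧ l.Nodup ∧
  ∀ (i j : ℕ) (hi : i < l.length) (hj : j < l.length), i < j →
    Fresher u (l.get ⟨i, hi⟩) (l.get ⟨j, hj⟩)

/-- The type annotation of an influencing value. -/
inductive IflType where
  | vm | m | v
  deriving DecidableEq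

def HasIflType (f : Transduction A G D) (u : DataWord A D) (d : D) :
    IflType → Prop
  | .vm => Memorable f d u ∧ Vulnerable f d u
  | .m => Memorable f d u ∧ ¬ Vulnerable f d u
  | .v => Vulnerable f d u ∧ ¬ Memorable f d u

/-- `al` is `aifl_f(u)` (listed freshest first). -/
def IsAiflSeq (f : Transduction A G D) (u : DataWord A D)
    (al : List (D × IflType)) : Prop :=
  IsIflSeq f u (al.map Prod.fst) ∧ ∀ p ∈ al, HasIflType f u p.1 p.2

/-- The equivalence `u1 ≡_f u2`. -/
def FEquiv (f : Transduction A G D) (u1 u2 : DataWord A D) : Prop :=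
  ∃ π : Equiv.Perm D,
    (∀ v, foShift ((u1.length : ℤ) - (u2.length : ℤ))
        (leftFac f (permW π u2) v) = leftFac f u1 v) ∧
    (∀ al, IsAiflSeq f (permW π u2) al ↔ IsAiflSeq f u1 al) ∧
    (∀ u v1 v2, (rightFac f (u1 ++ u) v1 = rightFac f (u1 ++ u) v2) ↔
        (rightFac f (permW π u2 ++ u) v1 = rightFac f (permW π u2 ++ u) v2))

/-- `≡_f` has finitely many equivalence classes. -/
def FEquivFiniteIndex (f : Transduction A G D) : Prop :=
  ∃ S : Set (DataWord A D), S.Finite ∧ ∀ u, ∃ r ∈ S, FEquiv f r u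

/-- `E` is an equalizing scheme for `f` with associated sequence `δ 1, δ 2, ⋯`
(the value `δ 0` is irrelevant here): for every data word `u`, the `i`-th
`f`-influencing value of `E(u)(u)` is `δ i`. -/
def IsEqualizingSchemeWith (f : Transduction A G D)
    (E : DataWord A D → Equiv.Perm D) (δ : ℕ → D) : Prop :=
  ∀ (u : DataWord A D) (l : List D), IsIflSeq f (permW (E u) u) l →
    ∀ (i : ℕ) (h : i < l.length), l.get ⟨i, h⟩ = δ (i + 1)

def IsEqualizingScheme (f : Transduction A G D)
    (E : DataWord A D → Equiv.Perm D) : Prop :=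
  ∃ δ : ℕ → D, IsEqualizingSchemeWith f E δ

/-- `v1 ≡_f^E v2`. -/
def REquiv (f : Transduction A G D) (E : DataWord A D → Equiv.Perm D)
    (v1 v2 : DataWord A D) : Prop :=
  ∀ u, rightFac f (permW (E u) u) v1 = rightFac f (permW (E u) u) v2

/-- `≡_f^E` has finitely many equivalence classes. -/
def REquivFiniteIndex (f : Transduction A G D)
    (E : DataWord A D → Equiv.Perm D) : Prop :=
  ∃ S : Set (DataWord A D), S.Finite ∧ ∀ v, ∃ r ∈ S, REquiv f E r v

/-- The blocks of a factored output: the maximal infixes consisting of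
retained triples, in order. -/
def triBlocks (l : List (FOElem G D)) : List (List (FOElem G D)) :=
  (l.splitOnP fun e => !e.isTri).filter fun b => !b.isEmpty

/-- Helper for concretizing non-right blocks: walk `f(u̲ ∣ v̲ ∣ w̲)` and
substitute the `i`-th occurrence of the left mark by the `i`-th left block
(taken from `L`) and the `j`-th occurrence of the middle mark by the `j`-th
middle block (taken from `M`); right marks are turned into separators. -/
def annotateNR (L M : List (List (FOElem G D))) :
    List (FOElem G D) → ℕ → ℕ → List (Option (List (FOElem G D)))
  | [], _, _ => []
  | .left :: rest, i, j => some (L.getD i []) :: annotateNR L M rest (i + 1) j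
  | .middle :: rest, i, j => some (M.getD j []) :: annotateNR L M rest i (j + 1)
  | .right :: rest, i, j => none :: annotateNR L M rest i j
  | .tri g d o :: rest, i, j => some [.tri g d o] :: annotateNR L M rest i j

/-- The concretizations of the non-right blocks of `f(u̲ ∣ v̲ ∣ w̲)`, in order:
the concretization of a non-right block is the concatenation of the
concretizations of the left blocks (taken from `f(u ∣ v·w̲)`) and the middle
blocks (taken from `f(u̲ ∣ v ∣ w̲)`) occurring in it. -/
def concretizedNRBlocks (f : Transduction A G D) (u v w : DataWord A D) :
    List (List (FOElem G D)) :=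
  (((annotateNR (triBlocks (rightFac f u (v ++ w))) (triBlocks (threeFac f u v w))
        (allFac f u v w) 0 0).splitOnP fun o => o.isNone).filter
      fun grp => !grp.isEmpty).map fun grp => grp.reduceOption.flatten

/-- `π` tracks influencing values (relative to the sequence `δ`) on `w`:
the `i`-th `f`-influencing value of `w` is `π (δ i)`. -/
def TracksInfluencing (f : Transduction A G D) (δ : ℕ → D) (π : Equiv.Perm D)
    (w : DataWord A D) : Prop :=
  ∀ l, IsIflSeq f w l → ∀ (i : ℕ) (h : i < l.length), l.get ⟨i, h⟩ = π (δ (i + 1))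

end SSRT

open SSRT

namespace SSRT

set_option linter.unusedSectionVars false
set_option linter.unnecessarySeqFocus false

variable {A G D : Type} [DecidableEq G] [DecidableEq D]

@[simp] lemma permW_length (π : Equiv.Perm D) (u : DataWord A D) :
    (permW π u).length = u.length := List.length_map _

lemma permW_append (π : Equiv.Perm D) (u v : DataWord A D) :
    permW π (u ++ v) = permW π u ++ permW π v := List.map_append

lemma permW_permW (π ρ : Equiv.Perm D) (u : DataWord A D) :
    permW π (permW ρ u) = permW (π * ρ) u := by
  simp [permW, List.map_map, Function.comp]

@[simp] lemma permW_inv_cancel (π : Equiv.Perm D) (u : DataWord A D) :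
    permW π⁻¹ (permW π u) = u := by
  simp only [permW, List.map_map]
  conv_rhs => rw [← List.map_id u]
  exact List.map_congr_left fun p _ => by simp

@[simp] lemma permW_cancel_inv (π : Equiv.Perm D) (u : DataWord A D) :
    permW π (permW π⁻¹ u) = u := by
  simp only [permW, List.map_map]
  conv_rhs => rw [← List.map_id u]
  exact List.map_congr_left fun p _ => by simp

/-- The element action of a permutation on factored-output elements. -/
def pElem (π : Equiv.Perm D) : FOElem G D → FOElem G D
  | .tri g d o => .tri g (π d) o
  | .left => .left
  | .middle => .middle
  | .right => .right

lemma permFO_eq (π : Equiv.Perm D) (l : List (FOElem G D)) :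
    permFO π l = l.map (pElem π) := by
  simp only [permFO]
  apply List.map_congr_left
  intro e _; cases e <;> rfl

@[simp] lemma pElem_inv_cancel (π : Equiv.Perm D) (e : FOElem G D) :
    pElem π⁻¹ (pElem π e) = e := by cases e <;> simp [pElem]

lemma pElem_injective (π : Equiv.Perm D) :
    Function.Injective (pElem (G := G) π) := by
  intro a b h
  have := congrArg (pElem (G := G) π⁻¹) h
  simpa using this

@[simp] lemma isMark_pElem (π : Equiv.Perm D) (e : FOElem G D) :
    (pElem π e).isMark = e.isMark := by
  cases e <;> rfl

@[simp] lemma permFO_inv_cancel (π : Equiv.Perm D) (l : List (FOElem G D)) :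
    permFO π⁻¹ (permFO π l) = l := by
  simp only [permFO_eq, List.map_map]
  conv_rhs => rw [← List.map_id l]
  exact List.map_congr_left fun e _ => by simp

lemma permFO_injective (π : Equiv.Perm D) :
    Function.Injective (permFO (G := G) π) := by
  intro a b h
  have := congrArg (permFO (G := G) π⁻¹) h
  simpa using this

lemma permFO_inj_iff (π : Equiv.Perm D) {l1 l2 : List (FOElem G D)} :
    permFO π l1 = permFO π l2 ↔ l1 = l2 :=
  (permFO_injective π).eq_iff

@[simp] lemma foShift_zero (l : List (FOElem G D)) : foShift 0 l = l := by
  simp only [foShift]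
  conv_rhs => rw [← List.map_id l]
  exact List.map_congr_left fun e _ => by cases e <;> simp

lemma foShift_foShift (z w : ℤ) (l : List (FOElem G D)) :
    foShift z (foShift w l) = foShift (z + w) l := by
  simp only [foShift, List.map_map]
  apply List.map_congr_left
  intro e _; cases e <;> simp [Function.comp] <;> ring

lemma permFO_foShift (π : Equiv.Perm D) (z : ℤ) (l : List (FOElem G D)) :
    permFO π (foShift z l) = foShift z (permFO π l) := by
  simp only [permFO_eq, foShift, List.map_map]
  apply List.map_congr_left
  intro e _; cases e <;> rfl

lemma collapse_map_pElem (π : Equiv.Perm D) :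
    ∀ l : List (FOElem G D), collapse (l.map (pElem π)) = (collapse l).map (pElem π)
  | [] => rfl
  | [a] => rfl
  | a :: b :: rest => by
    rw [List.map_cons, List.map_cons, collapse, collapse]
    by_cases h : a = b ∧ a.isMark
    · rw [if_pos ⟨by rw [h.1], by simp [h.2]⟩, if_pos h, ← List.map_cons,
        collapse_map_pElem π (b :: rest)]
    · rw [if_neg ?_, if_neg h, ← List.map_cons, collapse_map_pElem π (b :: rest),
        List.map_cons]
      rintro ⟨h1, h2⟩
      exact h ⟨pElem_injective π h1, by simpa using h2⟩

lemma collapse_permFO (π : Equiv.Perm D) (l : List (FOElem G D)) :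
    collapse (permFO π l) = permFO π (collapse l) := by
  simp only [permFO_eq]; exact collapse_map_pElem π l

end SSRT
namespace SSRT

variable {A G D : Type} [DecidableEq G] [DecidableEq D]
variable {f : Transduction A G D}

lemma leftFac_perm (hf : PermInvariant f) (π : Equiv.Perm D) (u v : DataWord A D) :
    leftFac f (permW π u) (permW π v) = permFO π (leftFac f u v) := by
  unfold leftFac
  rw [← permW_append, hf π (u ++ v), ← collapse_permFO]
  congr 1
  simp only [permOut, permFO_eq, List.map_map, permW_length]
  apply List.map_congr_left
  intro t _
  by_cases h : t.2.2 ≤ u.length <;> simp [h, pElem, Function.comp]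

lemma rightFac_perm (hf : PermInvariant f) (π : Equiv.Perm D) (u v : DataWord A D) :
    rightFac f (permW π u) (permW π v) = permFO π (rightFac f u v) := by
  unfold rightFac
  rw [← permW_append, hf π (u ++ v), ← collapse_permFO]
  congr 1
  simp only [permOut, permFO_eq, List.map_map, permW_length]
  apply List.map_congr_left
  intro t _
  by_cases h : u.length < t.2.2 <;> simp [h, pElem, Function.comp]

lemma leftFac_perm' (hf : PermInvariant f) (π : Equiv.Perm D) (u v : DataWord A D) :
    leftFac f (permW π u) v = permFO π (leftFac f u (permW π⁻¹ v)) := by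
  conv_lhs => rw [← permW_cancel_inv π v]
  exact leftFac_perm hf π u (permW π⁻¹ v)

lemma rightFac_perm' (hf : PermInvariant f) (π : Equiv.Perm D) (a b c : DataWord A D) :
    rightFac f (permW π a ++ b) c
      = permFO π (rightFac f (a ++ permW π⁻¹ b) (permW π⁻¹ c)) := by
  conv_lhs => rw [← permW_cancel_inv π b, ← permW_cancel_inv π c, ← permW_append]
  exact rightFac_perm hf π (a ++ permW π⁻¹ b) (permW π⁻¹ c)

end SSRT
namespace SSRT

set_option linter.unusedSectionVars false

variable {A G D : Type} [DecidableEq G] [DecidableEq D]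
variable {f : Transduction A G D}

lemma getElem?_permW (π : Equiv.Perm D) (u : DataWord A D) (i : ℕ) :
    (permW π u)[i]? = Option.map (fun p => (p.1, π p.2)) u[i]? :=
  List.getElem?_map

lemma permW_get_fst (π : Equiv.Perm D) (u : DataWord A D) (i : ℕ) :
    (permW π u)[i]?.map Prod.fst = u[i]?.map Prod.fst := by
  rw [getElem?_permW, Option.map_map]; rfl

lemma permW_get_snd (π : Equiv.Perm D) (u : DataWord A D) (i : ℕ) :
    (permW π u)[i]?.map Prod.snd = (u[i]?.map Prod.snd).map π := by
  rw [getElem?_permW, Option.map_map, Option.map_map]; rfl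

lemma optmap_perm_inj (π : Equiv.Perm D) {x y : Option D} :
    Option.map π x = Option.map π y ↔ x = y :=
  ⟨fun h => Option.map_injective π.injective h, fun h => by rw [h]⟩

lemma iso_perm_iff (π : Equiv.Perm D) {u v : DataWord A D} :
    Iso (permW π u) (permW π v) ↔ Iso u v := by
  unfold Iso
  simp only [permW_length, permW_get_fst, permW_get_snd, optmap_perm_inj]

lemma replaceD_perm (π : Equiv.Perm D) (u : DataWord A D) (d d' : D) :
    replaceD (permW π u) (π d) (π d') = permW π (replaceD u d d') := by
  simp only [replaceD, permW, List.map_map]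
  apply List.map_congr_left
  intro p _
  simp only [Function.comp_apply]
  by_cases h : p.2 = d
  · simp [h]
  · simp [h, π.injective.ne h]

lemma safeRepl_perm_iff (π : Equiv.Perm D) {d d' : D} {u : DataWord A D} :
    SafeRepl (π d) (π d') (permW π u) ↔ SafeRepl d d' u := by
  unfold SafeRepl
  rw [replaceD_perm]
  exact iso_perm_iff π

lemma occursIn_perm_iff (π : Equiv.Perm D) {d : D} {u : DataWord A D} :
    OccursIn (π d) (permW π u) ↔ OccursIn d u := by
  unfold OccursIn
  simp only [permW, List.mem_map]
  constructor
  · rintro ⟨p, ⟨q, hq, rfl⟩, h⟩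
    exact ⟨q, hq, π.injective h⟩
  · rintro ⟨p, hp, h⟩
    exact ⟨(p.1, π p.2), ⟨p, hp, rfl⟩, by rw [h]⟩

lemma memorable_perm_mono (hf : PermInvariant f) (π : Equiv.Perm D) {d : D}
    {u : DataWord A D} (h : Memorable f d u) : Memorable f (π d) (permW π u) := by
  obtain ⟨v, d', hsafe, hne⟩ := h
  refine ⟨permW π v, π d', (safeRepl_perm_iff π).mpr hsafe, ?_⟩
  rw [replaceD_perm, leftFac_perm hf, leftFac_perm hf]
  exact fun hc => hne (permFO_injective π hc)

lemma memorable_perm_iff (hf : PermInvariant f) (π : Equiv.Perm D) {d : D}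
    {u : DataWord A D} : Memorable f (π d) (permW π u) ↔ Memorable f d u := by
  constructor
  · intro h
    have := memorable_perm_mono hf π⁻¹ h
    simpa using this
  · exact memorable_perm_mono hf π

lemma vulnerable_perm_mono (hf : PermInvariant f) (π : Equiv.Perm D) {d : D}
    {u : DataWord A D} (h : Vulnerable f d u) : Vulnerable f (π d) (permW π u) := by
  obtain ⟨u', v, d', hocc, hsafe, hne⟩ := h
  refine ⟨permW π u', permW π v, π d', ?_, ?_, ?_⟩
  · rw [occursIn_perm_iff]; exact hocc
  · rw [← permW_append, ← permW_append, safeRepl_perm_iff]; exact hsafe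
  · rw [← permW_append, replaceD_perm, rightFac_perm hf, rightFac_perm hf]
    exact fun hc => hne (permFO_injective π hc)

lemma vulnerable_perm_iff (hf : PermInvariant f) (π : Equiv.Perm D) {d : D}
    {u : DataWord A D} : Vulnerable f (π d) (permW π u) ↔ Vulnerable f d u := by
  constructor
  · intro h
    have := vulnerable_perm_mono hf π⁻¹ h
    simpa using this
  · exact vulnerable_perm_mono hf π

lemma influencing_perm_iff (hf : PermInvariant f) (π : Equiv.Perm D) {d : D}
    {u : DataWord A D} : Influencing f (π d) (permW π u) ↔ Influencing f d u := by
  unfold Influencing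
  rw [memorable_perm_iff hf, vulnerable_perm_iff hf]

lemma hasIflType_perm_iff (hf : PermInvariant f) (π : Equiv.Perm D) {d : D}
    {u : DataWord A D} (t : IflType) :
    HasIflType f (permW π u) (π d) t ↔ HasIflType f u d t := by
  cases t <;> simp only [HasIflType] <;>
    rw [memorable_perm_iff hf, vulnerable_perm_iff hf]

end SSRT
namespace SSRT

set_option linter.unusedSectionVars false

variable {A G D : Type} [DecidableEq G] [DecidableEq D]
variable {f : Transduction A G D}

lemma isLastOcc_perm_mono (π : Equiv.Perm D) {u : DataWord A D} {d : D} {i : ℕ}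
    (h : IsLastOcc u d i) : IsLastOcc (permW π u) (π d) i := by
  obtain ⟨⟨a, ha⟩, hlast⟩ := h
  refine ⟨⟨a, by rw [getElem?_permW, ha]; rfl⟩, ?_⟩
  intro j hj p hp
  rw [getElem?_permW] at hp
  cases hq : u[j]? with
  | none => rw [hq] at hp; simp at hp
  | some q =>
    rw [hq] at hp
    simp only [Option.map_some, Option.some_inj] at hp
    subst hp
    intro hc
    exact hlast j hj q hq (π.injective hc)

lemma isLastOcc_perm_iff (π : Equiv.Perm D) {u : DataWord A D} {d : D} {i : ℕ} :
    IsLastOcc (permW π u) (π d) i ↔ IsLastOcc u d i := by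
  constructor
  · intro h
    have := isLastOcc_perm_mono π⁻¹ h
    simpa using this
  · exact isLastOcc_perm_mono π

lemma fresher_perm_iff (π : Equiv.Perm D) {u : DataWord A D} {d e : D} :
    Fresher (permW π u) (π d) (π e) ↔ Fresher u d e := by
  unfold Fresher
  simp only [isLastOcc_perm_iff]

lemma isIflSeq_perm_mono (hf : PermInvariant f) (π : Equiv.Perm D)
    {u : DataWord A D} {l : List D} (h : IsIflSeq f u l) :
    IsIflSeq f (permW π u) (l.map π) := by
  obtain ⟨hmem, hnodup, hfresh⟩ := h
  refine ⟨?_, hnodup.map π.injective, ?_⟩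
  · intro d
    constructor
    · intro hd
      obtain ⟨e, he, rfl⟩ := List.mem_map.mp hd
      exact (influencing_perm_iff hf π).mpr ((hmem e).mp he)
    · intro hd
      have : Influencing f (π (π⁻¹ d)) (permW π u) := by simpa using hd
      have h2 : Influencing f (π⁻¹ d) u := (influencing_perm_iff hf π).mp this
      exact List.mem_map.mpr ⟨π⁻¹ d, (hmem _).mpr h2, by simp⟩
  · intro i j hi hj hij
    have hi' : i < l.length := by simpa using hi
    have hj' : j < l.length := by simpa using hj
    have g1 : (l.map π).get ⟨i, hi⟩ = π (l.get ⟨i, hi'⟩) := by simp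
    have g2 : (l.map π).get ⟨j, hj⟩ = π (l.get ⟨j, hj'⟩) := by simp
    rw [g1, g2, fresher_perm_iff]
    exact hfresh i j hi' hj' hij

lemma isAiflSeq_perm_mono (hf : PermInvariant f) (π : Equiv.Perm D)
    {u : DataWord A D} {al : List (D × IflType)} (h : IsAiflSeq f u al) :
    IsAiflSeq f (permW π u) (al.map fun p => (π p.1, p.2)) := by
  obtain ⟨hifl, htype⟩ := h
  constructor
  · have : (al.map fun p => (π p.1, p.2)).map Prod.fst = (al.map Prod.fst).map π := by
      simp [List.map_map]
    rw [this]
    exact isIflSeq_perm_mono hf π hifl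
  · intro p hp
    obtain ⟨q, hq, rfl⟩ := List.mem_map.mp hp
    exact (hasIflType_perm_iff hf π q.2).mpr (htype q hq)

lemma isAiflSeq_perm_iff (hf : PermInvariant f) (π : Equiv.Perm D)
    {u : DataWord A D} (al : List (D × IflType)) :
    IsAiflSeq f (permW π u) al ↔ IsAiflSeq f u (al.map fun p => (π⁻¹ p.1, p.2)) := by
  constructor
  · intro h
    have := isAiflSeq_perm_mono hf π⁻¹ h
    simpa using this
  · intro h
    have := isAiflSeq_perm_mono hf π h
    simp only [List.map_map] at this
    have heq : (al.map ((fun p => (π p.1, p.2)) ∘ fun p : D × IflType => (π⁻¹ p.1, p.2))) = al := by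
      conv_rhs => rw [← List.map_id al]
      exact List.map_congr_left fun p _ => by simp
    rwa [heq] at this

end SSRT
namespace SSRT

set_option linter.unusedSectionVars false

variable {A G D : Type} [DecidableEq G] [DecidableEq D]

@[simp] lemma permW_one (u : DataWord A D) : permW 1 u = u := by
  simp only [permW]
  conv_rhs => rw [← List.map_id u]
  exact List.map_congr_left fun p _ => by simp

end SSRT
/-- Lemma 5 in the paper: if a transduction `f` is invariant
under permutations, then `≡_f` is an equivalence relation on data words. -/
theorem fEquiv_is_equivalence
    {D A G : Type} [DecidableEq D] [Infinite D] [DecidableEq G]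
    [Fintype A] [Fintype G]
    (f : Transduction A G D) (hf : PermInvariant f) :
    Equivalence (FEquiv f) := by
  constructor
  · -- reflexivity
    intro u
    refine ⟨1, fun v => ?_, fun al => ?_, fun u' v1 v2 => ?_⟩
    · rw [permW_one, sub_self, foShift_zero]
    · rw [permW_one]
    · rw [permW_one]
  · -- symmetry
    rintro u1 u2 ⟨π, h1, h2, h3⟩
    refine ⟨π⁻¹, fun v => ?_, fun al => ?_, fun u v1 v2 => ?_⟩
    · -- condition (i)
      apply permFO_injective π
      have key : permFO π (leftFac f (permW π⁻¹ u1) v) = leftFac f u1 (permW π v) := by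
        rw [leftFac_perm' hf π⁻¹ u1 v]
        simpa using permFO_inv_cancel π⁻¹ (leftFac f u1 (permW π v))
      calc permFO π (foShift ((u2.length : ℤ) - (u1.length : ℤ))
              (leftFac f (permW π⁻¹ u1) v))
          = foShift ((u2.length : ℤ) - (u1.length : ℤ))
              (permFO π (leftFac f (permW π⁻¹ u1) v)) := permFO_foShift ..
        _ = foShift ((u2.length : ℤ) - (u1.length : ℤ)) (leftFac f u1 (permW π v)) := by
              rw [key]
        _ = foShift ((u2.length : ℤ) - (u1.length : ℤ))
              (foShift ((u1.length : ℤ) - (u2.length : ℤ))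
                (leftFac f (permW π u2) (permW π v))) := by rw [h1 (permW π v)]
        _ = foShift 0 (leftFac f (permW π u2) (permW π v)) := by
              rw [foShift_foShift]; ring_nf
        _ = permFO π (leftFac f u2 v) := by rw [foShift_zero, leftFac_perm hf]
    · -- condition (ii)
      calc IsAiflSeq f (permW π⁻¹ u1) al
          ↔ IsAiflSeq f u1 (al.map fun p => (π p.1, p.2)) := by
            simpa using isAiflSeq_perm_iff hf π⁻¹ (u := u1) al
        _ ↔ IsAiflSeq f (permW π u2) (al.map fun p => (π p.1, p.2)) := (h2 _).symm
        _ ↔ IsAiflSeq f u2 al := by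
            rw [isAiflSeq_perm_iff hf π]
            have heq : ((al.map fun p => (π p.1, p.2)).map
                fun p : D × IflType => (π⁻¹ p.1, p.2)) = al := by
              rw [List.map_map]
              conv_rhs => rw [← List.map_id al]
              exact List.map_congr_left fun p _ => by simp
            rw [heq]
    · -- condition (iii)
      have e1 : ∀ w, rightFac f (permW π⁻¹ u1 ++ u) w
          = permFO π⁻¹ (rightFac f (u1 ++ permW π u) (permW π w)) := by
        intro w
        have := rightFac_perm' hf π⁻¹ u1 u w
        simpa using this
      have e2 : ∀ w, rightFac f (permW π u2 ++ permW π u) (permW π w)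
          = permFO π (rightFac f (u2 ++ u) w) := by
        intro w; rw [← permW_append]; exact rightFac_perm hf π (u2 ++ u) w
      calc (rightFac f (u2 ++ u) v1 = rightFac f (u2 ++ u) v2)
          ↔ (rightFac f (permW π u2 ++ permW π u) (permW π v1)
              = rightFac f (permW π u2 ++ permW π u) (permW π v2)) := by
            rw [e2 v1, e2 v2]; exact ((permFO_injective π).eq_iff).symm
        _ ↔ (rightFac f (u1 ++ permW π u) (permW π v1)
              = rightFac f (u1 ++ permW π u) (permW π v2)) :=
            (h3 (permW π u) (permW π v1) (permW π v2)).symm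
        _ ↔ (rightFac f (permW π⁻¹ u1 ++ u) v1
              = rightFac f (permW π⁻¹ u1 ++ u) v2) := by
            rw [e1 v1, e1 v2]; exact ((permFO_injective π⁻¹).eq_iff).symm
  · -- transitivity
    rintro u1 u2 u3 ⟨π, h1, h2, h3⟩ ⟨ρ, g1, g2, g3⟩
    refine ⟨π * ρ, fun v => ?_, fun al => ?_, fun u v1 v2 => ?_⟩
    · -- condition (i)
      have key : leftFac f (permW (π * ρ) u3) v
          = permFO π (leftFac f (permW ρ u3) (permW π⁻¹ v)) := by
        rw [← permW_permW]; exact leftFac_perm' hf π _ v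
      have hz : ((u1.length : ℤ) - (u3.length : ℤ))
          = ((u1.length : ℤ) - (u2.length : ℤ)) + ((u2.length : ℤ) - (u3.length : ℤ)) := by
        ring
      rw [key, hz, ← foShift_foShift, ← permFO_foShift, g1 (permW π⁻¹ v)]
      have key2 : permFO π (leftFac f u2 (permW π⁻¹ v)) = leftFac f (permW π u2) v := by
        rw [leftFac_perm' hf π u2 v]
      rw [key2]
      exact h1 v
    · -- condition (ii)
      calc IsAiflSeq f (permW (π * ρ) u3) al
          ↔ IsAiflSeq f (permW ρ u3) (al.map fun p => (π⁻¹ p.1, p.2)) := by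
            rw [← permW_permW]; exact isAiflSeq_perm_iff hf π al
        _ ↔ IsAiflSeq f u2 (al.map fun p => (π⁻¹ p.1, p.2)) := g2 _
        _ ↔ IsAiflSeq f (permW π u2) al := (isAiflSeq_perm_iff hf π al).symm
        _ ↔ IsAiflSeq f u1 al := h2 al
    · -- condition (iii)
      calc (rightFac f (u1 ++ u) v1 = rightFac f (u1 ++ u) v2)
          ↔ (rightFac f (permW π u2 ++ u) v1
              = rightFac f (permW π u2 ++ u) v2) := h3 u v1 v2
        _ ↔ (rightFac f (u2 ++ permW π⁻¹ u) (permW π⁻¹ v1)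
              = rightFac f (u2 ++ permW π⁻¹ u) (permW π⁻¹ v2)) := by
            rw [rightFac_perm' hf π u2 u v1, rightFac_perm' hf π u2 u v2]
            exact (permFO_injective π).eq_iff
        _ ↔ (rightFac f (permW ρ u3 ++ permW π⁻¹ u) (permW π⁻¹ v1)
              = rightFac f (permW ρ u3 ++ permW π⁻¹ u) (permW π⁻¹ v2)) := g3 _ _ _
        _ ↔ (rightFac f (permW (π * ρ) u3 ++ u) v1
              = rightFac f (permW (π * ρ) u3 ++ u) v2) := by
            rw [show permW (π * ρ) u3 = permW π (permW ρ u3) from (permW_permW π ρ u3).symm,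
              rightFac_perm' hf π (permW ρ u3) u v1, rightFac_perm' hf π (permW ρ u3) u v2]
            exact ((permFO_injective π).eq_iff).symm
end

section
/- Let f be a transduction, u a data word, σ ∈ Σ, and d, e distinct data values. If d is not f-memorable in u, then d is not f-memorable in u·(σ,e); likewise, if d is not f-vulnerable in u, then d is not f-vulnerable in u·(σ,e). -/
namespace SSRT

variable {A G D : Type}

variable [DecidableEq G] [DecidableEq D]

/-! ### Auxiliary lemmas -/

section Aux

lemma collapse_cons_head (z : FOElem G D) (rest : List (FOElem G D)) :
    ∃ t, collapse (z :: rest) = z :: t := by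
  induction rest generalizing z with
  | nil => exact ⟨[], rfl⟩
  | cons y ys ih =>
    rw [collapse]
    by_cases h : z = y ∧ z.isMark
    · obtain ⟨t, ht⟩ := ih y
      exact ⟨t, by rw [if_pos h, ht, h.1]⟩
    · exact ⟨collapse (y :: ys), by rw [if_neg h]⟩

lemma collapse_cons (x : FOElem G D) (l : List (FOElem G D)) :
    collapse (x :: l) = match collapse l with
      | [] => [x]
      | y :: t => if x = y ∧ x.isMark then y :: t else x :: y :: t := by
  cases l with
  | nil => rfl
  | cons z rest =>
    obtain ⟨t, ht⟩ := collapse_cons_head z rest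
    rw [collapse, ht]

lemma collapse_map_of_mark (h : FOElem G D → FOElem G D)
    (hmark : ∀ e : FOElem G D, e.isMark → h e = e) :
    ∀ l : List (FOElem G D),
      collapse (List.map h (collapse l)) = collapse (List.map h l)
  | [] => rfl
  | [a] => rfl
  | a :: b :: rest => by
    by_cases hab : a = b ∧ a.isMark
    · have h1 : collapse (a :: b :: rest) = collapse (b :: rest) := by
        rw [collapse, if_pos hab]
      have h2 : collapse (List.map h (a :: b :: rest))
          = collapse (List.map h (b :: rest)) := by
        show collapse (h a :: h b :: List.map h rest) = _
        have ha : h a = a := hmark a hab.2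
        rw [collapse, if_pos (show h a = h b ∧ (h a).isMark from
          ⟨by rw [hab.1], by rw [ha]; exact hab.2⟩)]
        rfl
      rw [h1, h2, collapse_map_of_mark h hmark (b :: rest)]
    · have h1 : collapse (a :: b :: rest) = a :: collapse (b :: rest) := by
        rw [collapse, if_neg hab]
      rw [h1]
      show collapse (h a :: List.map h (collapse (b :: rest)))
          = collapse (List.map h (a :: b :: rest))
      rw [collapse_cons, collapse_map_of_mark h hmark (b :: rest)]
      show _ = collapse (h a :: List.map h (b :: rest))
      rw [collapse_cons (h a) (List.map h (b :: rest))]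

/-- Pushing the cut one factor to the right. -/
def hcut (n : ℤ) : FOElem G D → FOElem G D
  | .tri g d o => if o ≤ n then .left else .tri g d o
  | .left => .left
  | .middle => .middle
  | .right => .right

omit [DecidableEq G] [DecidableEq D] in
lemma hcut_mark (n : ℤ) : ∀ e : FOElem G D, e.isMark → hcut n e = e := by
  intro e he
  cases e <;> simp_all [FOElem.isMark, FOElem.isTri, hcut]

lemma leftFac_append (f : Transduction A G D) (u x v : DataWord A D) :
    leftFac f (u ++ x) v =
      collapse (List.map (hcut ((u.length + x.length : ℕ) : ℤ))
        (leftFac f u (x ++ v))) := by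
  unfold leftFac
  rw [collapse_map_of_mark _ (hcut_mark _), List.map_map, List.append_assoc]
  congr 1
  apply List.map_congr_left
  intro t _
  simp only [Function.comp_apply, List.length_append]
  by_cases h1 : t.2.2 ≤ u.length
  · rw [if_pos h1, if_pos (le_trans h1 (Nat.le_add_right _ _))]
    rfl
  · rw [if_neg h1]
    by_cases h2 : t.2.2 ≤ u.length + x.length
    · rw [if_pos h2]
      simp only [hcut]
      rw [if_pos (show (t.2.2 : ℤ) ≤ ((u.length + x.length : ℕ) : ℤ) by
        exact_mod_cast h2)]
    · rw [if_neg h2]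
      simp only [hcut]
      rw [if_neg (show ¬ (t.2.2 : ℤ) ≤ ((u.length + x.length : ℕ) : ℤ) by
        exact_mod_cast h2)]

lemma replaceD_append (u x : DataWord A D) (d d' : D) :
    replaceD (u ++ x) d d' = replaceD u d d' ++ replaceD x d d' :=
  List.map_append

lemma replaceD_length (u : DataWord A D) (d d' : D) :
    (replaceD u d d').length = u.length := List.length_map _

lemma safeRepl_prefix {d d' : D} {u x : DataWord A D}
    (h : SafeRepl d d' (u ++ x)) : SafeRepl d d' u := by
  obtain ⟨-, -, h3⟩ := h
  refine ⟨replaceD_length u d d', ?_, ?_⟩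
  · intro i
    simp only [replaceD, List.getElem?_map]
    cases u[i]? <;> rfl
  · intro i j
    have key : ∀ k : ℕ, k < u.length →
        (replaceD (u ++ x) d d')[k]? = (replaceD u d d')[k]?
          ∧ (u ++ x)[k]? = u[k]? := by
      intro k hk
      constructor
      · rw [replaceD_append,
          List.getElem?_append_left (by rwa [replaceD_length])]
      · rw [List.getElem?_append_left hk]
    rcases lt_or_ge i u.length with hi | hi
    · rcases lt_or_ge j u.length with hj | hj
      · have := h3 i j
        rw [(key i hi).1, (key i hi).2, (key j hj).1, (key j hj).2] at this
        exact this
      · have hui : u[i]? ≠ none := by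
          simp [List.getElem?_eq_none_iff]; omega
        have huj : u[j]? = none := by
          simp [List.getElem?_eq_none_iff]; omega
        have hri : (replaceD u d d')[i]? ≠ none := by
          simp [List.getElem?_eq_none_iff, replaceD_length]; omega
        have hrj : (replaceD u d d')[j]? = none := by
          simp [List.getElem?_eq_none_iff, replaceD_length]; omega
        rw [huj, hrj]
        simp only [Option.map_none]
        constructor
        · intro hc; exact absurd (Option.map_eq_none_iff.mp hc) hri
        · intro hc; exact absurd (Option.map_eq_none_iff.mp hc) hui
    · rcases lt_or_ge j u.length with hj | hj
      · have hui : u[i]? = none := by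
          simp [List.getElem?_eq_none_iff]; omega
        have huj : u[j]? ≠ none := by
          simp [List.getElem?_eq_none_iff]; omega
        have hri : (replaceD u d d')[i]? = none := by
          simp [List.getElem?_eq_none_iff, replaceD_length]; omega
        have hrj : (replaceD u d d')[j]? ≠ none := by
          simp [List.getElem?_eq_none_iff, replaceD_length]; omega
        rw [hui, hri]
        simp only [Option.map_none]
        constructor
        · intro hc; exact absurd (Option.map_eq_none_iff.mp hc.symm) hrj
        · intro hc; exact absurd (Option.map_eq_none_iff.mp hc.symm) huj
      · have hui : u[i]? = none := by
          simp [List.getElem?_eq_none_iff]; omega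
        have huj : u[j]? = none := by
          simp [List.getElem?_eq_none_iff]; omega
        have hri : (replaceD u d d')[i]? = none := by
          simp [List.getElem?_eq_none_iff, replaceD_length]; omega
        have hrj : (replaceD u d d')[j]? = none := by
          simp [List.getElem?_eq_none_iff, replaceD_length]; omega
        rw [hui, huj, hri, hrj]

end Aux

end SSRT

open SSRT

/-- Lemma 8: memorable and vulnerable values are monotone
under extending the word by a distinct data value. -/
theorem iflVals_monotonic
    {D A G : Type} [DecidableEq D] [Infinite D] [DecidableEq G]
    [Fintype A] [Fintype G]
    (f : Transduction A G D) (u : DataWord A D) (σ : A) (d e : D)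
    (hde : d ≠ e) :
    (¬ Memorable f d u → ¬ Memorable f d (u ++ [(σ, e)])) ∧
    (¬ Vulnerable f d u → ¬ Vulnerable f d (u ++ [(σ, e)])) := by
  constructor
  · -- Memorable part
    intro hm hm'
    apply hm
    obtain ⟨v, d', hsafe, hneq⟩ := hm'
    have hrep : replaceD (u ++ [(σ, e)]) d d' = replaceD u d d' ++ [(σ, e)] := by
      rw [replaceD_append]
      simp [replaceD, hde.symm]
    refine ⟨[(σ, e)] ++ v, d', ?_, ?_⟩
    · exact safeRepl_prefix hsafe
    · intro heq
      apply hneq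
      rw [hrep, leftFac_append, leftFac_append, heq, replaceD_length]
  · -- Vulnerable part
    intro hv hv'
    apply hv
    obtain ⟨u', v, d', hnocc, hsafe, hneq⟩ := hv'
    have key : u ++ (σ, e) :: u' = (u ++ [(σ, e)]) ++ u' := by simp
    refine ⟨(σ, e) :: u', v, d', ?_, ?_, ?_⟩
    · rintro ⟨p, hp, hpd⟩
      rcases List.mem_cons.mp hp with h | h
      · exact hde (by rw [← hpd, h])
      · exact hnocc ⟨p, h, hpd⟩
    · rw [key]; exact hsafe
    · rw [key]; exact hneq
end

section
/- Suppose f is a transduction that is invariant under permutations and without data peeking. If a data value d is f-vulnerable in a data word u, then d occurs in u. -/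
open SSRT

/-- Lemma 24: vulnerable values occur in the word. -/
theorem vulnerable_occurs
    {D A G : Type} [DecidableEq D] [Infinite D] [DecidableEq G]
    [Fintype A] [Fintype G]
    (f : Transduction A G D)
    (hperm : PermInvariant f) (hpeek : NoDataPeeking f)
    (d : D) (u : DataWord A D) (hd : Vulnerable f d u) :
    OccursIn d u := by
  by_contra h
  obtain ⟨u', v, d', hu', hsafe, hneq⟩ := hd
  by_cases hdv : OccursIn d v
  · obtain ⟨p, hpv, hpd⟩ := hdv
    have hdd' : d' ≠ d := by
      intro hEq
      apply hneq
      congr 1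
      conv_rhs => rw [← List.map_id v]
      apply List.map_congr_left
      intro q hq
      obtain ⟨a, e⟩ := q
      by_cases hqd : e = d <;> simp [replaceD, hqd, hEq]
    -- d' does not occur in u ++ u' ++ v
    have hd'nocc : ¬ OccursIn d' (u ++ u' ++ v) := by
      rintro ⟨q, hq, hqd'⟩
      obtain ⟨i, hi⟩ := List.mem_iff_getElem?.mp hq
      have hpw : p ∈ u ++ u' ++ v := List.mem_append_right _ hpv
      obtain ⟨j, hj⟩ := List.mem_iff_getElem?.mp hpw
      obtain ⟨_, _, hiso⟩ := hsafe
      have h1 : (replaceD (u ++ u' ++ v) d d')[i]?.map Prod.snd = some d' := by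
        rw [replaceD, List.getElem?_map, hi]; simp [hqd', hdd']
      have h2 : (replaceD (u ++ u' ++ v) d d')[j]?.map Prod.snd = some d' := by
        rw [replaceD, List.getElem?_map, hj]; simp [hpd]
      have := (hiso i j).mp (h1.trans h2.symm)
      rw [hi, hj] at this
      simp at this
      exact hdd' (hqd'.symm.trans (this.trans hpd))
    have hdnoccL : ∀ q ∈ u ++ u', (q : A × D).2 ≠ d := by
      intro q hq
      rcases List.mem_append.mp hq with h1 | h1
      · exact fun he => h (⟨q, h1, he⟩)
      · exact fun he => hu' (⟨q, h1, he⟩)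
    have hd'noccL : ∀ q ∈ u ++ u', (q : A × D).2 ≠ d' := by
      intro q hq he
      exact hd'nocc ⟨q, List.mem_append_left _ hq, he⟩
    have hd'noccV : ∀ q ∈ v, (q : A × D).2 ≠ d' := by
      intro q hq he
      exact hd'nocc ⟨q, List.mem_append_right _ hq, he⟩
    set π := Equiv.swap d d' with hπ
    have hpermL : permW π (u ++ u') = u ++ u' := by
      conv_rhs => rw [← List.map_id (u ++ u')]
      apply List.map_congr_left
      intro q hq
      simp [hπ, Equiv.swap_apply_of_ne_of_ne (hdnoccL q hq) (hd'noccL q hq)]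
    have hpermV : permW π v = replaceD v d d' := by
      apply List.map_congr_left
      intro q hq
      by_cases hqd : q.2 = d
      · simp [permW, replaceD, hqd, hπ]
      · simp [permW, replaceD, hqd, hπ, Equiv.swap_apply_of_ne_of_ne hqd (hd'noccV q hq)]
    apply hneq
    have hsplit : permW π ((u ++ u') ++ v) = (u ++ u') ++ replaceD v d d' := by
      unfold permW
      rw [List.map_append]
      exact congrArg₂ _ hpermL hpermV
    have hF : f ((u ++ u') ++ replaceD v d d') = permOut π (f ((u ++ u') ++ v)) := by
      rw [← hsplit, hperm]
    unfold rightFac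
    congr 1
    rw [hF]
    unfold permOut
    rw [List.map_map]
    apply List.map_congr_left
    intro t ht
    by_cases ho : u.length + u'.length < t.2.2
    · simp [Function.comp, ho]
    · obtain ⟨i, a, hi, hio⟩ := hpeek _ t ht
      push_neg at ho
      have hilt : i < (u ++ u').length := by
        rw [List.length_append]; omega
      have hget : (u ++ u')[i]? = some (a, t.2.1) := by
        rw [← hi, List.getElem?_append_left hilt]
      have hmem : (a, t.2.1) ∈ u ++ u' := by
        have := List.getElem?_eq_some_iff.mp hget
        obtain ⟨hh, he⟩ := this
        rw [← he]
        exact List.getElem_mem _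
      have h1 : t.2.1 ≠ d := hdnoccL _ hmem
      have h2 : t.2.1 ≠ d' := hd'noccL _ hmem
      simp [Function.comp, ho, hπ, Equiv.swap_apply_of_ne_of_ne h1 h2]
  · apply hneq
    congr 1
    conv_rhs => rw [← List.map_id v]
    apply List.map_congr_left
    intro q hq
    have : q.2 ≠ d := fun he => hdv ⟨q, hq, he⟩
    simp [replaceD, this]
end

section
/- Let f be a transduction and u, v, w1, w2 be data words. If f(u̲ | v | w1̲) = f(u̲ | v | w2̲) and f(u | v·w1̲) = f(u | v·w2̲), then f(u·v | w1̲) = f(u·v | w2̲). -/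
open SSRT

namespace SSRTAux

open SSRT

variable {G D : Type}

/-- Merge a three-way factored output with the collapsed right factorization:
left marks are replaced by the corresponding tri-blocks of the second list. -/
def mer : List (FOElem G D) → List (FOElem G D) → List (FOElem G D)
  | [], _ => []
  | .left :: T, R =>
      ((R.dropWhile fun e => !e.isTri).takeWhile fun e => e.isTri)
        ++ mer T ((R.dropWhile fun e => !e.isTri).dropWhile fun e => e.isTri)
  | .middle :: T, R => .middle :: mer T R
  | .right :: T, R => .right :: mer T R
  | .tri g d o :: T, R => .tri g d o :: mer T R

lemma mer_skip_right (T R : List (FOElem G D)) :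
    mer T (.right :: R) = mer T R := by
  induction T generalizing R with
  | nil => simp [mer]
  | cons x T ih =>
    cases x <;> simp [mer, FOElem.isTri, List.dropWhile, ih]

@[simp] lemma isTri_tri (g : G) (d : D) (o : ℤ) :
    (FOElem.tri g d o).isTri = true := rfl
@[simp] lemma isTri_left : (FOElem.left : FOElem G D).isTri = false := rfl
@[simp] lemma isTri_right : (FOElem.right : FOElem G D).isTri = false := rfl
@[simp] lemma isMark_tri (g : G) (d : D) (o : ℤ) :
    (FOElem.tri g d o).isMark = false := rfl
@[simp] lemma isMark_left : (FOElem.left : FOElem G D).isMark = true := rfl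
@[simp] lemma isMark_right : (FOElem.right : FOElem G D).isMark = true := rfl

lemma mer_left_tri (g : G) (d : D) (o : ℤ) (T R : List (FOElem G D))
    (hR : (R.dropWhile fun e => !e.isTri) = R) :
    mer (.left :: T) (.tri g d o :: R) = .tri g d o :: mer (.left :: T) R := by
  simp [mer, List.dropWhile_cons, List.takeWhile_cons, hR]

lemma mer_left_tri_right (g : G) (d : D) (o : ℤ) (T R : List (FOElem G D)) :
    mer (.left :: T) (.tri g d o :: .right :: R)
      = .tri g d o :: mer T (.right :: R) := by
  simp [mer, List.dropWhile_cons, List.takeWhile_cons]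

lemma left_ne_tri (g : G) (d : D) (o : ℤ) :
    (FOElem.left : FOElem G D) ≠ .tri g d o := fun h => nomatch h
lemma left_ne_right : (FOElem.left : FOElem G D) ≠ .right :=
  fun h => nomatch h
lemma right_ne_tri (g : G) (d : D) (o : ℤ) :
    (FOElem.right : FOElem G D) ≠ .tri g d o := fun h => nomatch h
lemma right_ne_left : (FOElem.right : FOElem G D) ≠ .left :=
  fun h => nomatch h

lemma mer_cons_tri (g : G) (d : D) (o : ℤ) (T R : List (FOElem G D)) :
    mer (.tri g d o :: T) R = .tri g d o :: mer T R := by simp [mer]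

lemma mer_cons_right (T R : List (FOElem G D)) :
    mer (.right :: T) R = .right :: mer T R := by simp [mer]

variable [DecidableEq G] [DecidableEq D]

lemma collapse_cons_exists (l : List (FOElem G D)) (x : FOElem G D) :
    ∃ r, collapse (x :: l) = x :: r := by
  induction l generalizing x with
  | nil => exact ⟨[], rfl⟩
  | cons y l ih =>
    rw [collapse]
    by_cases h : x = y ∧ (x.isMark : Prop)
    · rw [if_pos h]
      obtain ⟨r, hr⟩ := ih y
      exact ⟨r, by rw [hr, h.1]⟩
    · rw [if_neg h]
      exact ⟨collapse (y :: l), rfl⟩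

lemma collapse_merge (x : FOElem G D) (l : List (FOElem G D)) (h : x.isMark) :
    collapse (x :: x :: l) = collapse (x :: l) := by
  rw [collapse, if_pos ⟨rfl, h⟩]

lemma collapse_cons_tri (g : G) (d : D) (o : ℤ) (y : FOElem G D)
    (l : List (FOElem G D)) :
    collapse (.tri g d o :: y :: l) = .tri g d o :: collapse (y :: l) := by
  rw [collapse, if_neg]
  rintro ⟨-, h⟩
  simp [FOElem.isMark, FOElem.isTri] at h

lemma collapse_cons_ne (x y : FOElem G D) (l : List (FOElem G D)) (h : x ≠ y) :
    collapse (x :: y :: l) = x :: collapse (y :: l) := by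
  rw [collapse, if_neg]
  rintro ⟨h', -⟩
  exact h h'

lemma key (a b : ℕ) :
    ∀ (n : ℕ) (s : List (G × D × ℕ)), s.length ≤ n →
      collapse (s.map fun t => if a + b < t.2.2 then FOElem.right
          else FOElem.tri t.1 t.2.1 (t.2.2 : ℤ)) =
      mer (collapse (s.map fun t => if t.2.2 ≤ a then FOElem.left
            else if t.2.2 ≤ a + b then FOElem.tri t.1 t.2.1 (t.2.2 : ℤ)
            else FOElem.right))
          (collapse (s.map fun t => if a < t.2.2 then FOElem.right
            else FOElem.tri t.1 t.2.1 (t.2.2 : ℤ))) := by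
  intro n
  induction n with
  | zero =>
    intro s hs
    have hs' : s = [] := List.length_eq_zero_iff.mp (Nat.le_zero.mp hs)
    subst hs'
    simp [mer, collapse]
  | succ n ih =>
    intro s hs
    match s with
    | [] => simp [mer, collapse]
    | [t] =>
      by_cases c1 : t.2.2 ≤ a
      · have c1' : t.2.2 ≤ a + b := by omega
        simp [c1, c1', mer, collapse, List.dropWhile, List.takeWhile,
          FOElem.isTri, show ¬ a + b < t.2.2 by omega, show ¬ a < t.2.2 by omega]
      · by_cases c2 : t.2.2 ≤ a + b
        · simp [c1, c2, mer, collapse, show ¬ a + b < t.2.2 by omega,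
            show a < t.2.2 by omega]
        · simp [c1, c2, mer, collapse, show a + b < t.2.2 by omega,
            show a < t.2.2 by omega]
    | t1 :: t2 :: s' =>
      have hlen : (t2 :: s').length ≤ n := by
        simpa using Nat.le_of_succ_le_succ hs
      have IH := ih (t2 :: s') hlen
      simp only [List.map_cons] at IH ⊢
      set LT := List.map (fun t : G × D × ℕ => if a + b < t.2.2 then FOElem.right
          else FOElem.tri t.1 t.2.1 (t.2.2 : ℤ)) s' with hLT
      set L3 := List.map (fun t : G × D × ℕ => if t.2.2 ≤ a then FOElem.left
          else if t.2.2 ≤ a + b then FOElem.tri t.1 t.2.1 (t.2.2 : ℤ)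
          else FOElem.right) s' with hL3
      set LR := List.map (fun t : G × D × ℕ => if a < t.2.2 then FOElem.right
          else FOElem.tri t.1 t.2.1 (t.2.2 : ℤ)) s' with hLR
      by_cases c1 : t1.2.2 ≤ a
      · have d1 : ¬ a + b < t1.2.2 := by omega
        have d1' : ¬ a < t1.2.2 := by omega
        simp only [if_pos c1, if_neg d1, if_neg d1'] at IH ⊢
        by_cases c2 : t2.2.2 ≤ a
        · have e1 : ¬ a + b < t2.2.2 := by omega
          have e1' : ¬ a < t2.2.2 := by omega
          simp only [if_pos c2, if_neg e1, if_neg e1'] at IH ⊢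
          rw [collapse_cons_tri, collapse_cons_tri, collapse_merge FOElem.left _ rfl]
          obtain ⟨T, hT⟩ := collapse_cons_exists L3 FOElem.left
          obtain ⟨R, hR⟩ := collapse_cons_exists LR
            (FOElem.tri t2.1 t2.2.1 (t2.2.2 : ℤ))
          rw [hT, hR, mer_left_tri _ _ _ _ _ (by simp [List.dropWhile_cons]),
            ← hT, ← hR, IH]
        · by_cases c2b : t2.2.2 ≤ a + b
          · have e1 : ¬ a + b < t2.2.2 := by omega
            have e1' : a < t2.2.2 := by omega
            simp only [if_neg c2, if_pos c2b, if_neg e1, if_pos e1'] at IH ⊢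
            rw [collapse_cons_tri, collapse_cons_tri,
              collapse_cons_ne _ _ _ (left_ne_tri _ _ _)]
            obtain ⟨T, hT⟩ := collapse_cons_exists L3
              (FOElem.tri t2.1 t2.2.1 (t2.2.2 : ℤ))
            obtain ⟨R, hR⟩ := collapse_cons_exists LR FOElem.right
            rw [hT, hR, mer_left_tri_right, ← hT, ← hR, IH]
          · have e1 : a + b < t2.2.2 := by omega
            have e1' : a < t2.2.2 := by omega
            simp only [if_neg c2, if_neg c2b, if_pos e1, if_pos e1'] at IH ⊢
            rw [collapse_cons_tri, collapse_cons_tri,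
              collapse_cons_ne _ _ _ left_ne_right]
            obtain ⟨T, hT⟩ := collapse_cons_exists L3 FOElem.right
            obtain ⟨R, hR⟩ := collapse_cons_exists LR FOElem.right
            rw [hT, hR, mer_left_tri_right, ← hT, ← hR, IH]
      · by_cases c1b : t1.2.2 ≤ a + b
        · have d1 : ¬ a + b < t1.2.2 := by omega
          have d1' : a < t1.2.2 := by omega
          simp only [if_neg c1, if_pos c1b, if_neg d1, if_pos d1'] at IH ⊢
          by_cases c2 : t2.2.2 ≤ a
          · have e1 : ¬ a + b < t2.2.2 := by omega
            have e1' : ¬ a < t2.2.2 := by omega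
            simp only [if_pos c2, if_neg e1, if_neg e1'] at IH ⊢
            rw [collapse_cons_tri, collapse_cons_tri,
              collapse_cons_ne _ _ _ (right_ne_tri _ _ _),
              mer_cons_tri, mer_skip_right, IH]
          · by_cases c2b : t2.2.2 ≤ a + b
            · have e1 : ¬ a + b < t2.2.2 := by omega
              have e1' : a < t2.2.2 := by omega
              simp only [if_neg c2, if_pos c2b, if_neg e1, if_pos e1'] at IH ⊢
              rw [collapse_cons_tri, collapse_cons_tri, collapse_merge FOElem.right _ rfl,
                mer_cons_tri, IH]
            · have e1 : a + b < t2.2.2 := by omega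
              have e1' : a < t2.2.2 := by omega
              simp only [if_neg c2, if_neg c2b, if_pos e1, if_pos e1'] at IH ⊢
              rw [collapse_cons_tri, collapse_cons_tri, collapse_merge FOElem.right _ rfl,
                mer_cons_tri, IH]
        · have d1 : a + b < t1.2.2 := by omega
          have d1' : a < t1.2.2 := by omega
          simp only [if_neg c1, if_neg c1b, if_pos d1, if_pos d1'] at IH ⊢
          by_cases c2 : t2.2.2 ≤ a
          · have e1 : ¬ a + b < t2.2.2 := by omega
            have e1' : ¬ a < t2.2.2 := by omega
            simp only [if_pos c2, if_neg e1, if_neg e1'] at IH ⊢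
            rw [collapse_cons_ne _ _ _ (right_ne_tri _ _ _),
              collapse_cons_ne _ _ _ right_ne_left,
              collapse_cons_ne _ _ _ (right_ne_tri _ _ _),
              mer_cons_right, mer_skip_right, IH]
          · by_cases c2b : t2.2.2 ≤ a + b
            · have e1 : ¬ a + b < t2.2.2 := by omega
              have e1' : a < t2.2.2 := by omega
              simp only [if_neg c2, if_pos c2b, if_neg e1, if_pos e1'] at IH ⊢
              rw [collapse_cons_ne _ _ _ (right_ne_tri _ _ _),
                collapse_cons_ne _ _ _ (right_ne_tri _ _ _),
                collapse_merge FOElem.right _ rfl, mer_cons_right, IH]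
            · have e1 : a + b < t2.2.2 := by omega
              have e1' : a < t2.2.2 := by omega
              simp only [if_neg c2, if_neg c2b, if_pos e1, if_pos e1'] at IH ⊢
              rw [collapse_merge FOElem.right _ rfl, collapse_merge FOElem.right _ rfl,
                collapse_merge FOElem.right _ rfl]
              exact IH

end SSRTAux

/-- Lemma 29. -/
theorem facOp_equality_from_parts
    {D A G : Type} [DecidableEq D] [Infinite D] [DecidableEq G]
    [Fintype A] [Fintype G]
    (f : Transduction A G D) (u v w1 w2 : DataWord A D)
    (h1 : threeFac f u v w1 = threeFac f u v w2)
    (h2 : rightFac f u (v ++ w1) = rightFac f u (v ++ w2)) :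
    rightFac f (u ++ v) w1 = rightFac f (u ++ v) w2 := by
  have E : ∀ w : DataWord A D, rightFac f (u ++ v) w
      = SSRTAux.mer (threeFac f u v w) (rightFac f u (v ++ w)) := by
    intro w
    have h := SSRTAux.key (G := G) (D := D) u.length v.length
      (f (u ++ (v ++ w))).length (f (u ++ (v ++ w))) le_rfl
    simp only [rightFac, threeFac, List.append_assoc, List.length_append]
    exact h
  rw [E w1, E w2, h1, h2]
end
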